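/- Let m be an even integer with m ≥ 6 and let d > 0 be a real number. Define the real m×m circulant matrix B by B_{j,k} = 6 + d if j = k; B_{j,k} = −4 if j ≡ k − 1 (mod m) or j ≡ k + 1 (mod m); B_{j,k} = 1 if j ≡ k − 2 (mod m) or j ≡ k + 2 (mod m); and B_{j,k} = 0 otherwise. Then the condition number of B equals (16 + d)/d. -/

import Mathlib

/-!
Write `B = d + L²`, where `(L y)ⱼ = 2 yⱼ - yⱼ₊₁ - yⱼ₋₁` is the Laplacian of the `m`-cycle. `L` is
symmetric with `‖L‖ ≤ 4`, so for a unit vector `y` we get `‖B y‖ ≥ ⟪B y, y⟫ = d + ‖L y‖² ≥ d` and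
`‖B y‖ ≤ d + 16`. Both bounds are attained: the constant vector is an eigenvector of `B` for `d`
and, `m` being even, the alternating vector `(-1)ʲ` is one for `d + 16`.
-/

open Matrix

/-- The Euclidean norm of a vector in `ℝᵏ`. -/
noncomputable def euclNorm {k : ℕ} (v : Fin k → ℝ) : ℝ :=
  Real.sqrt (∑ i, v i ^ 2)

/-- The greatest singular value of a real `m × k` matrix `M` (`m ≤ k`):
`sup {‖Mᵀ y‖ : y ∈ ℝᵐ, ‖y‖ = 1}`. -/
noncomputable def sigmaMax {m k : ℕ} (M : Matrix (Fin m) (Fin k) ℝ) : ℝ :=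
  sSup {x | ∃ y : Fin m → ℝ, euclNorm y = 1 ∧ x = euclNorm (Mᵀ.mulVec y)}

/-- The least (`m`-th greatest) singular value of a real `m × k` matrix `M`
(`m ≤ k`): `inf {‖Mᵀ y‖ : y ∈ ℝᵐ, ‖y‖ = 1}`. -/
noncomputable def sigmaMin {m k : ℕ} (M : Matrix (Fin m) (Fin k) ℝ) : ℝ :=
  sInf {x | ∃ y : Fin m → ℝ, euclNorm y = 1 ∧ x = euclNorm (Mᵀ.mulVec y)}

/-- The condition number of a real `m × k` matrix (`m ≤ k`): the ratio of its
greatest singular value to its least singular value. -/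
noncomputable def condNum {m k : ℕ} (M : Matrix (Fin m) (Fin k) ℝ) : ℝ :=
  sigmaMax M / sigmaMin M

/-- The `m × m` circulant matrix of the paper: `6 + d` on the diagonal, `-4` on
the (cyclic) first off-diagonals (`j ≡ k ± 1 (mod m)`), `1` on the (cyclic)
second off-diagonals (`j ≡ k ± 2 (mod m)`), and `0` elsewhere. -/
noncomputable def circB (m : ℕ) (d : ℝ) : Matrix (Fin m) (Fin m) ℝ :=
  Matrix.of fun j k =>
    if (j : ℕ) = (k : ℕ) then 6 + d
    else if ((j : ℕ) + 1) % m = (k : ℕ) ∨ ((k : ℕ) + 1) % m = (j : ℕ) then -4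
    else if ((j : ℕ) + 2) % m = (k : ℕ) ∨ ((k : ℕ) + 2) % m = (j : ℕ) then 1
    else 0

open Fin.NatCast Fin.CommRing

section EuclNorm

variable {k : ℕ}

lemma euclNorm_eq_norm_toLp (v : Fin k → ℝ) : euclNorm v = ‖WithLp.toLp 2 v‖ := by
  simp [euclNorm, EuclideanSpace.norm_eq, sq_abs]

lemma euclNorm_add_le (v w : Fin k → ℝ) : euclNorm (v + w) ≤ euclNorm v + euclNorm w := by
  simpa only [euclNorm_eq_norm_toLp, WithLp.toLp_add] using norm_add_le _ _

lemma euclNorm_sub_le (v w : Fin k → ℝ) : euclNorm (v - w) ≤ euclNorm v + euclNorm w := by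
  simpa only [euclNorm_eq_norm_toLp, WithLp.toLp_sub] using norm_sub_le _ _

lemma euclNorm_smul (c : ℝ) (v : Fin k → ℝ) : euclNorm (c • v) = |c| * euclNorm v := by
  simp only [euclNorm_eq_norm_toLp, WithLp.toLp_smul, norm_smul, Real.norm_eq_abs]

lemma euclNorm_ne_zero {v : Fin k → ℝ} (hv : v ≠ 0) : euclNorm v ≠ 0 := by
  rw [euclNorm_eq_norm_toLp, norm_ne_zero_iff]
  exact fun h => hv (by simpa using congrArg WithLp.ofLp h)

lemma euclNorm_comp_equiv (v : Fin k → ℝ) (e : Fin k ≃ Fin k) :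
    euclNorm (v ∘ e) = euclNorm v := by
  simp only [euclNorm, Function.comp_apply, e.sum_comp (fun i => v i ^ 2)]

lemma sq_euclNorm (v : Fin k → ℝ) : euclNorm v ^ 2 = ∑ i, v i ^ 2 :=
  Real.sq_sqrt (by positivity)

lemma sum_mul_le_euclNorm_mul (v w : Fin k → ℝ) : ∑ i, v i * w i ≤ euclNorm v * euclNorm w :=
  Real.sum_mul_le_sqrt_mul_sqrt _ v w

end EuclNorm

def normsOnUnitSphere {m k : ℕ} (M : Matrix (Fin m) (Fin k) ℝ) : Set ℝ :=
  {x | ∃ y : Fin k → ℝ, euclNorm y = 1 ∧ x = euclNorm (M *ᵥ y)}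

lemma abs_mem_normsOnUnitSphere {m : ℕ} {M : Matrix (Fin m) (Fin m) ℝ} {v : Fin m → ℝ} {c : ℝ}
    (hv : v ≠ 0) (hMv : M *ᵥ v = c • v) : |c| ∈ normsOnUnitSphere M := by
  have hn := euclNorm_ne_zero hv
  have hn' : 0 < euclNorm v := (Real.sqrt_nonneg _).lt_of_ne' hn
  refine ⟨(euclNorm v)⁻¹ • v, ?_, ?_⟩
  · rw [euclNorm_smul, abs_inv, abs_of_pos hn', inv_mul_cancel₀ hn]
  · rw [mulVec_smul, hMv, smul_comm, euclNorm_smul, euclNorm_smul, abs_inv, abs_of_pos hn']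
    field_simp

lemma condNum_eq_of_isLeast_of_isGreatest {m : ℕ} {M : Matrix (Fin m) (Fin m) ℝ} {a b : ℝ}
    (ha : IsLeast (normsOnUnitSphere Mᵀ) a) (hb : IsGreatest (normsOnUnitSphere Mᵀ) b) :
    condNum M = b / a := by
  rw [condNum, sigmaMax, sigmaMin, ← normsOnUnitSphere, hb.csSup_eq, ha.csInf_eq]

lemma Fin.natCast_ne_zero_of_lt {m n : ℕ} [NeZero m] (h0 : 0 < n) (hn : n < m) :
    (n : Fin m) ≠ 0 := by
  rw [Ne, Fin.natCast_eq_zero]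
  exact fun h => absurd (Nat.le_of_dvd h0 h) (by omega)

lemma nodup_cyclic_neighbours {m : ℕ} [NeZero m] (hm : 5 ≤ m) (j : Fin m) :
    [j, j + 1, j - 1, j + 2, j - 2].Nodup := by
  have hne (n : ℕ) (h0 : 0 < n) (h5 : n < 5) : (n : Fin m) ≠ 0 :=
    Fin.natCast_ne_zero_of_lt h0 (by omega)
  have h1 : (1 : Fin m) ≠ 0 := by exact_mod_cast hne 1 (by norm_num) (by norm_num)
  have h2 : (2 : Fin m) ≠ 0 := by exact_mod_cast hne 2 (by norm_num) (by norm_num)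
  have h3 : (3 : Fin m) ≠ 0 := by exact_mod_cast hne 3 (by norm_num) (by norm_num)
  have h4 : (4 : Fin m) ≠ 0 := by exact_mod_cast hne 4 (by norm_num) (by norm_num)
  simp only [List.nodup_cons, List.mem_cons, List.not_mem_nil, or_false, not_or, List.nodup_nil,
    and_true, not_false_eq_true]
  refine ⟨⟨?_, ?_, ?_, ?_⟩, ⟨?_, ?_, ?_⟩, ⟨?_, ?_⟩, ?_⟩ <;> intro h
  all_goals first
    | exact h1 (by linear_combination h) | exact h1 (by linear_combination -h)
    | exact h2 (by linear_combination h) | exact h2 (by linear_combination -h)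
    | exact h3 (by linear_combination h) | exact h3 (by linear_combination -h)
    | exact h4 (by linear_combination h)

lemma sum_ite_mul_of_nodup {α : Type*} [Fintype α] [DecidableEq α] {a₀ a₁ a₂ a₃ a₄ : α}
    (h : [a₀, a₁, a₂, a₃, a₄].Nodup) (c₀ c₁ c₂ : ℝ) (y : α → ℝ) :
    ∑ x, (if x = a₀ then c₀ else if x = a₁ ∨ x = a₂ then c₁ else if x = a₃ ∨ x = a₄ then c₂
      else 0) * y x = c₀ * y a₀ + c₁ * (y a₁ + y a₂) + c₂ * (y a₃ + y a₄) := by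
  have hsplit : ∀ x, (if x = a₀ then c₀ else if x = a₁ ∨ x = a₂ then c₁
      else if x = a₃ ∨ x = a₄ then c₂ else 0) = (if x = a₀ then c₀ else 0) +
      (if x = a₁ then c₁ else 0) + (if x = a₂ then c₁ else 0) + (if x = a₃ then c₂ else 0) +
      (if x = a₄ then c₂ else 0) := by
    simp only [List.nodup_cons, List.mem_cons, List.not_mem_nil] at h
    intro x
    split_ifs <;> simp_all
  simp only [hsplit, add_mul, ite_mul, zero_mul, Finset.sum_add_distrib, Finset.sum_ite_eq',
    Finset.mem_univ, if_true]
  ring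

lemma circB_transpose (m : ℕ) (d : ℝ) : (circB m d)ᵀ = circB m d := by
  ext j k
  simp only [transpose_apply, circB, of_apply]
  exact if_congr eq_comm rfl (if_congr or_comm rfl (if_congr or_comm rfl rfl))

lemma Fin.eq_add_natCast_iff {m : ℕ} [NeZero m] {c : ℕ} (hc : c < m) (j k : Fin m) :
    k = j + (c : Fin m) ↔ ((j : ℕ) + c) % m = k := by
  rw [Fin.ext_iff, Fin.val_add, Fin.val_natCast, Nat.mod_eq_of_lt hc, eq_comm]

lemma Fin.eq_sub_natCast_iff {m : ℕ} [NeZero m] {c : ℕ} (hc : c < m) (j k : Fin m) :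
    k = j - (c : Fin m) ↔ ((k : ℕ) + c) % m = j := by
  rw [eq_sub_iff_add_eq, Fin.ext_iff, Fin.val_add, Fin.val_natCast, Nat.mod_eq_of_lt hc]

lemma circB_apply {m : ℕ} [NeZero m] (hm : 3 ≤ m) (d : ℝ) (j k : Fin m) :
    circB m d j k = if k = j then 6 + d else if k = j + 1 ∨ k = j - 1 then -4
      else if k = j + 2 ∨ k = j - 2 then 1 else 0 := by
  have e0 : k = j ↔ (j : ℕ) = k := by rw [Fin.ext_iff, eq_comm]
  have e1 : (1 : Fin m) = ((1 : ℕ) : Fin m) := Nat.cast_one.symm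
  have e2 : (2 : Fin m) = ((2 : ℕ) : Fin m) := Nat.cast_ofNat.symm
  simp only [e0, e1, e2, Fin.eq_add_natCast_iff (m := m) (c := 1) (by omega),
    Fin.eq_sub_natCast_iff (m := m) (c := 1) (by omega),
    Fin.eq_add_natCast_iff (m := m) (c := 2) (by omega),
    Fin.eq_sub_natCast_iff (m := m) (c := 2) (by omega)]
  rfl

lemma circB_mulVec_apply {m : ℕ} [NeZero m] (hm : 5 ≤ m) (d : ℝ) (y : Fin m → ℝ) (j : Fin m) :
    (circB m d *ᵥ y) j
      = (6 + d) * y j - 4 * (y (j + 1) + y (j - 1)) + (y (j + 2) + y (j - 2)) := by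
  simp only [mulVec, dotProduct, circB_apply (by omega : 3 ≤ m),
    sum_ite_mul_of_nodup (nodup_cyclic_neighbours hm j)]
  ring

section CyclicLaplacian

variable {m : ℕ} [NeZero m]

def cyclicLaplacian (y : Fin m → ℝ) : Fin m → ℝ := fun j => 2 * y j - y (j + 1) - y (j - 1)

lemma circB_mulVec (hm : 5 ≤ m) (d : ℝ) (y : Fin m → ℝ) :
    circB m d *ᵥ y = d • y + cyclicLaplacian (cyclicLaplacian y) := by
  funext j
  rw [circB_mulVec_apply hm]
  simp only [Pi.add_apply, Pi.smul_apply, smul_eq_mul, cyclicLaplacian, add_sub_cancel_right,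
    sub_add_cancel, add_assoc, sub_sub, one_add_one_eq_two]
  ring

lemma euclNorm_cyclicLaplacian_le (y : Fin m → ℝ) :
    euclNorm (cyclicLaplacian y) ≤ 4 * euclNorm y := by
  have hshift (c : Fin m) : euclNorm (fun j => y (j + c)) = euclNorm y :=
    euclNorm_comp_equiv y (Equiv.addRight c)
  have hshift' (c : Fin m) : euclNorm (fun j => y (j - c)) = euclNorm y :=
    euclNorm_comp_equiv y (Equiv.subRight c)
  have hdef :
      cyclicLaplacian y = (2 : ℝ) • y - (fun j => y (j + 1)) - (fun j => y (j - 1)) := by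
    funext j
    simp only [cyclicLaplacian, Pi.sub_apply, Pi.smul_apply, smul_eq_mul]
  calc euclNorm (cyclicLaplacian y)
      = euclNorm ((2 : ℝ) • y - (fun j => y (j + 1)) - (fun j => y (j - 1))) := by rw [hdef]
    _ ≤ euclNorm ((2 : ℝ) • y - (fun j => y (j + 1))) + euclNorm (fun j => y (j - 1)) :=
        euclNorm_sub_le _ _
    _ ≤ euclNorm ((2 : ℝ) • y) + euclNorm (fun j => y (j + 1)) +
          euclNorm (fun j => y (j - 1)) := by
        gcongr; exact euclNorm_sub_le _ _
    _ = 4 * euclNorm y := by rw [euclNorm_smul, hshift, hshift']; norm_num; ring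

lemma sum_cyclicLaplacian_mul (z y : Fin m → ℝ) :
    ∑ j, cyclicLaplacian z j * y j = ∑ j, z j * cyclicLaplacian y j := by
  have hplus : ∑ j, z (j + 1) * y j = ∑ j, z j * y (j - 1) :=
    Fintype.sum_equiv (Equiv.addRight 1) _ _ fun j => by simp
  have hminus : ∑ j, z (j - 1) * y j = ∑ j, z j * y (j + 1) :=
    Fintype.sum_equiv (Equiv.subRight 1) _ _ fun j => by simp
  simp only [cyclicLaplacian, sub_mul, mul_sub, Finset.sum_sub_distrib, hplus, hminus, mul_assoc,
    mul_left_comm (z _)]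
  ring

lemma cyclicLaplacian_smul (c : ℝ) (y : Fin m → ℝ) :
    cyclicLaplacian (c • y) = c • cyclicLaplacian y := by
  funext j
  simp only [cyclicLaplacian, Pi.smul_apply, smul_eq_mul]
  ring

lemma cyclicLaplacian_const (c : ℝ) : cyclicLaplacian (fun _ : Fin m => c) = 0 := by
  funext j
  simp [cyclicLaplacian]; ring

lemma cyclicLaplacian_alternating (hme : Even m) :
    cyclicLaplacian (fun j : Fin m => (-1 : ℝ) ^ (j : ℕ))
      = (4 : ℝ) • fun j : Fin m => (-1 : ℝ) ^ (j : ℕ) := by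
  have hm2 : 1 < m := by
    obtain ⟨k, hk⟩ := hme
    have := NeZero.ne m
    omega
  have hsucc (j : Fin m) : (-1 : ℝ) ^ ((j + 1 : Fin m) : ℕ) = -(-1) ^ (j : ℕ) := by
    rw [Fin.val_add, neg_one_pow_eq_pow_mod_two, Nat.mod_mod_of_dvd _ (even_iff_two_dvd.1 hme),
      Fin.val_one', Nat.mod_eq_of_lt hm2, ← neg_one_pow_eq_pow_mod_two, pow_succ, mul_neg_one]
  funext j
  have hpred := hsucc (j - 1)
  rw [sub_add_cancel] at hpred
  simp only [cyclicLaplacian, Pi.smul_apply, smul_eq_mul, hsucc]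
  linarith

variable (hm : 5 ≤ m) {d : ℝ}
include hm

lemma le_euclNorm_circB_mulVec {y : Fin m → ℝ} (hy : euclNorm y = 1) :
    d ≤ euclNorm (circB m d *ᵥ y) := by
  have hquad : ∑ j, (circB m d *ᵥ y) j * y j = d + ∑ j, cyclicLaplacian y j ^ 2 := by
    simp only [circB_mulVec hm, Pi.add_apply, Pi.smul_apply, smul_eq_mul, add_mul,
      Finset.sum_add_distrib, sum_cyclicLaplacian_mul (cyclicLaplacian y) y, mul_assoc,
      ← Finset.mul_sum, ← sq,
      ← sq_euclNorm, hy]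
    ring
  calc d ≤ d + ∑ j, cyclicLaplacian y j ^ 2 := le_add_of_nonneg_right (by positivity)
    _ = ∑ j, (circB m d *ᵥ y) j * y j := hquad.symm
    _ ≤ euclNorm (circB m d *ᵥ y) := by simpa [hy] using sum_mul_le_euclNorm_mul _ y

lemma euclNorm_circB_mulVec_le {y : Fin m → ℝ} (hy : euclNorm y = 1) :
    euclNorm (circB m d *ᵥ y) ≤ |d| + 16 := by
  rw [circB_mulVec hm]
  calc euclNorm (d • y + cyclicLaplacian (cyclicLaplacian y))
      ≤ euclNorm (d • y) + euclNorm (cyclicLaplacian (cyclicLaplacian y)) := euclNorm_add_le _ _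
    _ ≤ |d| * euclNorm y + 4 * (4 * euclNorm y) := by
      rw [euclNorm_smul]
      gcongr
      exact (euclNorm_cyclicLaplacian_le _).trans (by gcongr; exact euclNorm_cyclicLaplacian_le y)
    _ = |d| + 16 := by rw [hy]; ring

lemma isLeast_normsOnUnitSphere_circB (hd : 0 ≤ d) :
    IsLeast (normsOnUnitSphere (circB m d)) d := by
  refine ⟨?_, fun x ⟨y, hy, hx⟩ => hx ▸ le_euclNorm_circB_mulVec hm hy⟩
  have hconst : circB m d *ᵥ (fun _ => 1) = d • fun _ => 1 := by
    rw [circB_mulVec hm, cyclicLaplacian_const,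
      show cyclicLaplacian (0 : Fin m → ℝ) = 0 from cyclicLaplacian_const 0, add_zero]
  simpa [abs_of_nonneg hd] using
    abs_mem_normsOnUnitSphere (fun h => one_ne_zero (congrFun h 0)) hconst

lemma isGreatest_normsOnUnitSphere_circB (hme : Even m) (hd : 0 ≤ d) :
    IsGreatest (normsOnUnitSphere (circB m d)) (16 + d) := by
  refine ⟨?_, fun x ⟨y, hy, hx⟩ => hx ▸ ?_⟩
  · have halt : circB m d *ᵥ (fun j : Fin m => (-1 : ℝ) ^ (j : ℕ))
        = (d + 16) • fun j : Fin m => (-1 : ℝ) ^ (j : ℕ) := by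
      rw [circB_mulVec hm, cyclicLaplacian_alternating hme, cyclicLaplacian_smul,
        cyclicLaplacian_alternating hme, smul_smul, ← add_smul]
      norm_num
    simpa [abs_of_nonneg (by linarith : 0 ≤ d + 16), add_comm] using
      abs_mem_normsOnUnitSphere (fun h => by simpa using congrFun h 0) halt
  · simpa [abs_of_nonneg hd, add_comm] using euclNorm_circB_mulVec_le hm (d := d) hy

end CyclicLaplacian

/-- For even `m ≥ 6` and `d > 0`, the condition number of the
circulant matrix `B` equals `(16 + d) / d`. -/
theorem stmt_18 (m : ℕ) (hm : 6 ≤ m) (hme : Even m) (d : ℝ) (hd : 0 < d) :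
    condNum (circB m d) = (16 + d) / d := by
  have : NeZero m := ⟨by omega⟩
  apply condNum_eq_of_isLeast_of_isGreatest <;> rw [circB_transpose]
  · exact isLeast_normsOnUnitSphere_circB (by omega) hd.le
  · exact isGreatest_normsOnUnitSphere_circB (by omega) hme hd.le
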